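/- Let 𝒳 ⊆ ℝ^d, let μ be a measure on 𝒳, fix j, and let φ[f] = ∫_𝒳 (∂f/∂x_j)² dμ. Suppose θ₀ is continuously differentiable with φ[θ₀] = 0 (the null hypothesis). Let (t_n) be a sequence of nonzero reals with t_n → 0, and let (h_n), h be continuously differentiable functions whose partial derivatives ∂h_n/∂x_j converge to ∂h/∂x_j in L²(μ). Then (φ[θ₀ + t_n h_n] − φ[θ₀]) / (t_n²/2) → 2 φ[h] as n → ∞; that is, the second-order Hadamard directional derivative of φ at θ₀ in the direction h equals 2 ∫_𝒳 (∂h/∂x_j)² dμ. -/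

import Mathlib

open MeasureTheory Filter

/-- Second-order Hadamard directional derivative of the significance
functional `φ[f] = ∫_𝒳 (∂f/∂x_j)² dμ` at a point `θ₀` satisfying the null `φ[θ₀] = 0`,
in the direction `h`: for any sequence `tₙ → 0` of nonzero reals and any sequence `hₙ`
with `∂hₙ/∂x_j → ∂h/∂x_j` in `L²(μ)`, one has
`(φ[θ₀ + tₙ hₙ] − φ[θ₀]) / (tₙ²/2) → 2 φ[h] = 2 ∫_𝒳 (∂h/∂x_j)² dμ`. -/
theorem phi_second_order_hadamard_derivative
    {d : ℕ} (𝒳 : Set (Fin d → ℝ)) (μ : Measure (Fin d → ℝ)) (j : Fin d)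
    (θ₀ h : (Fin d → ℝ) → ℝ) (hn : ℕ → (Fin d → ℝ) → ℝ) (t : ℕ → ℝ)
    (hθ₀ : ContDiff ℝ 1 θ₀) (hhC1 : ContDiff ℝ 1 h) (hhnC1 : ∀ n, ContDiff ℝ 1 (hn n))
    (hθ₀L2 : MemLp (fun x => fderiv ℝ θ₀ x (Pi.single j 1)) 2 (μ.restrict 𝒳))
    (hhL2 : MemLp (fun x => fderiv ℝ h x (Pi.single j 1)) 2 (μ.restrict 𝒳))
    (hhnL2 : ∀ n, MemLp (fun x => fderiv ℝ (hn n) x (Pi.single j 1)) 2 (μ.restrict 𝒳))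
    (hnull : ∫ x in 𝒳, (fderiv ℝ θ₀ x (Pi.single j 1)) ^ 2 ∂μ = 0)
    (ht0 : ∀ n, t n ≠ 0) (htlim : Tendsto t atTop (nhds 0))
    (hL2conv : Tendsto
      (fun n => eLpNorm
        (fun x => fderiv ℝ (hn n) x (Pi.single j 1) - fderiv ℝ h x (Pi.single j 1)) 2
        (μ.restrict 𝒳)) atTop (nhds 0)) :
    Tendsto
      (fun n =>
        ((∫ x in 𝒳, (fderiv ℝ (fun y => θ₀ y + t n * hn n y) x (Pi.single j 1)) ^ 2 ∂μ)
            - ∫ x in 𝒳, (fderiv ℝ θ₀ x (Pi.single j 1)) ^ 2 ∂μ)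
          / (t n ^ 2 / 2))
      atTop
      (nhds (2 * ∫ x in 𝒳, (fderiv ℝ h x (Pi.single j 1)) ^ 2 ∂μ)) := by
  set μ' := μ.restrict 𝒳 with hμ'
  set g0 : (Fin d → ℝ) → ℝ := fun x => fderiv ℝ θ₀ x (Pi.single j 1) with hg0
  set g : (Fin d → ℝ) → ℝ := fun x => fderiv ℝ h x (Pi.single j 1) with hg
  set gn : ℕ → (Fin d → ℝ) → ℝ := fun n x => fderiv ℝ (hn n) x (Pi.single j 1) with hgn
  -- g0 vanishes a.e.
  have hg0sq : Integrable (fun x => g0 x ^ 2) μ' := by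
    simpa [sq] using hθ₀L2.integrable_sq
  have hg0ae : ∀ᵐ x ∂μ', g0 x = 0 := by
    have h1 : (fun x => g0 x ^ 2) =ᵐ[μ'] 0 :=
      (integral_eq_zero_iff_of_nonneg (fun x => sq_nonneg _) hg0sq).1 hnull
    filter_upwards [h1] with x hx
    have hx' : g0 x ^ 2 = 0 := hx
    exact pow_eq_zero_iff (two_ne_zero) |>.1 hx'
  -- derivative of the perturbed function
  have hfderiv : ∀ n x, fderiv ℝ (fun y => θ₀ y + t n * hn n y) x (Pi.single j 1)
      = g0 x + t n * gn n x := by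
    intro n x
    have h1 : DifferentiableAt ℝ θ₀ x := (hθ₀.differentiable one_ne_zero).differentiableAt
    have h2 : DifferentiableAt ℝ (hn n) x := ((hhnC1 n).differentiable one_ne_zero).differentiableAt
    rw [fderiv_fun_add h1 (h2.const_mul _), fderiv_const_mul h2]
    simp [hg0, hgn]
  have key : ∀ n, (∫ x, (fderiv ℝ (fun y => θ₀ y + t n * hn n y) x (Pi.single j 1)) ^ 2 ∂μ')
      = t n ^ 2 * ∫ x, gn n x ^ 2 ∂μ' := by
    intro n
    have hcong : (fun x => (fderiv ℝ (fun y => θ₀ y + t n * hn n y) x (Pi.single j 1)) ^ 2)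
        =ᵐ[μ'] fun x => t n ^ 2 * gn n x ^ 2 := by
      filter_upwards [hg0ae] with x hx
      rw [hfderiv n x, hx]; ring
    rw [integral_congr_ae hcong, integral_const_mul]
  -- norm of an L² element
  have hsq : ∀ (f : (Fin d → ℝ) → ℝ) (hf : MemLp f 2 μ'),
      ∫ x, f x ^ 2 ∂μ' = ‖hf.toLp f‖ ^ 2 := by
    intro f hf
    rw [← real_inner_self_eq_norm_sq, L2.inner_def]
    apply integral_congr_ae
    filter_upwards [hf.coeFn_toLp] with x hx
    simp [hx, sq, RCLike.inner_apply]
  -- convergence in L²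
  set F : ℕ → Lp ℝ 2 μ' := fun n => (hhnL2 n).toLp _ with hF
  set G : Lp ℝ 2 μ' := hhL2.toLp _ with hG
  have hFG : Tendsto F atTop (nhds G) := by
    rw [tendsto_iff_dist_tendsto_zero]
    have hdist : ∀ n, dist (F n) G = (eLpNorm (fun x => gn n x - g x) 2 μ').toReal := by
      intro n
      rw [Lp.dist_def]
      congr 1
      apply eLpNorm_congr_ae
      filter_upwards [Lp.coeFn_sub (F n) G, (hhnL2 n).coeFn_toLp, hhL2.coeFn_toLp]
        with x h1 h2 h3
      simp only [h1, Pi.sub_apply, hF, hG, h2, h3]; rfl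
    simp only [hdist]
    have := (ENNReal.tendsto_toReal (a := 0) (by norm_num)).comp hL2conv
    exact this
  have hI : Tendsto (fun n => ∫ x, gn n x ^ 2 ∂μ') atTop (nhds (∫ x, g x ^ 2 ∂μ')) := by
    have hnorm : Tendsto (fun n => ‖F n‖ ^ 2) atTop (nhds (‖G‖ ^ 2)) :=
      (((continuous_norm.tendsto G).comp hFG).pow 2)
    have e1 : ∀ n, ∫ x, gn n x ^ 2 ∂μ' = ‖F n‖ ^ 2 := fun n => hsq _ (hhnL2 n)
    have e2 : ∫ x, g x ^ 2 ∂μ' = ‖G‖ ^ 2 := hsq _ hhL2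
    rw [e2]
    simpa only [e1] using hnorm
  have heq : ∀ n,
      ((∫ x, (fderiv ℝ (fun y => θ₀ y + t n * hn n y) x (Pi.single j 1)) ^ 2 ∂μ')
        - ∫ x, g0 x ^ 2 ∂μ') / (t n ^ 2 / 2) = 2 * ∫ x, gn n x ^ 2 ∂μ' := by
    intro n
    rw [key n, hnull]
    have htn : t n ^ 2 ≠ 0 := pow_ne_zero _ (ht0 n)
    field_simp
    rw [sub_zero, mul_div_cancel_left₀ _ htn]
  have := hI.const_mul 2
  exact Tendsto.congr (fun n => (heq n).symm) this
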